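/- Fix s ≥ 3 and let (G_i)_{i≥0} be the K_{2,s}-bootstrap process on an n-vertex graph G with n ≥ s + 2, and let τ := τ_{K_{2,s}}(G). Suppose 0 ≤ i ≤ τ − 4 and P is a partition of V(G) such that any two vertices lying in the same block of P have at least s − 1 common neighbours in G_i. Then there exist two distinct blocks A, B ∈ P such that in the partition (P \ {A, B}) ∪ {A ∪ B}, any two vertices lying in the same block have at least s − 1 common neighbours in G_{i+4}. -/

import Mathlib

open SimpleGraph

/-- The number of subgraphs of `G` isomorphic to `H`. -/
noncomputable def numCopies {α β : Type*} (H : SimpleGraph α) (G : SimpleGraph β) : ℕ :=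
  {G' : G.Subgraph | Nonempty (G'.coe ≃g H)}.ncard

/-- One step of the `H`-bootstrap process: add every missing edge whose addition
creates a new copy of `H`. -/
noncomputable def bootStep {α β : Type*} (H : SimpleGraph α) (G : SimpleGraph β) :
    SimpleGraph β :=
  G ⊔ SimpleGraph.fromRel (fun u v =>
    numCopies H G < numCopies H (G ⊔ SimpleGraph.fromEdgeSet {s(u, v)}))

/-- The `H`-bootstrap process `(G_i)_{i ≥ 0}` on the starting graph `G`. -/
noncomputable def bootProcess {α β : Type*} (H : SimpleGraph α) (G : SimpleGraph β) :
    ℕ → SimpleGraph β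
  | 0 => G
  | i + 1 => bootStep H (bootProcess H G i)

/-- The running time `τ_H(G)` of the `H`-bootstrap process on `G`. -/
noncomputable def runningTime {α β : Type*} (H : SimpleGraph α) (G : SimpleGraph β) : ℕ :=
  sInf {t | bootProcess H G t = bootProcess H G (t + 1)}

/-- `M_H(n)`, the maximum running time of the `H`-bootstrap process over all
`n`-vertex starting graphs. -/
noncomputable def maxRunningTime {α : Type*} (H : SimpleGraph α) (n : ℕ) : ℕ :=
  sSup {t | ∃ G : SimpleGraph (Fin n), runningTime H G = t}

/-!
Call `P` *cohesive* at time `t` if any two vertices of a common block have `s - 1` common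
neighbours in `G_t`, and *separated* if any two vertices with `s` common neighbours lie in a
common block. While `P` is cohesive, an edge `qx` with `p, q` in one block forces the edge `px`
one step later: `p, q`, `x` and `s - 1` common neighbours of `p, q` span a new `K_{2,s}`.

If `P` is not separated at some time `t ∈ (i, i + 3]`, witnessed by `p, q` in blocks `A ≠ B`,
this rule makes every vertex of `A ∪ B` adjacent at time `t + 1` to the `s` common neighbours of
`p, q` (except itself), so `A` and `B` can be merged. Otherwise, an edge `cd` that is new at time
`t + 1` lies in a new copy of `K_{2,s}` in which `c`, say, has a twin `w` adjacent to `d` at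
time `t`, and separation puts `w` in the block of `c`. Tracing an edge of `G_{i+3}` back three
steps in this way gives an edge of `G_i` between the blocks of its endpoints, which two
applications of the rule turn into the edge itself at time `i + 2`. Hence `G_{i+2} = G_{i+3}`,
contradicting `i + 4 ≤ τ`.
-/

namespace SimpleGraph

variable {α β : Type*}

local notation "K[2," s "]" => completeBipartiteGraph (Fin 2) (Fin s)

lemma le_bootStep (H : SimpleGraph α) (G : SimpleGraph β) : G ≤ bootStep H G := le_sup_left

lemma bootProcess_mono (H : SimpleGraph α) (G : SimpleGraph β) : Monotone (bootProcess H G) :=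
  monotone_nat_of_le_succ fun t => le_bootStep H (bootProcess H G t)

section Copies

variable {H : SimpleGraph α} {G G' : SimpleGraph β}

lemma commonNeighbors_mono (h : G ≤ G') (x y : β) :
    G.commonNeighbors x y ⊆ G'.commonNeighbors x y :=
  fun _ hz => ⟨h hz.1, h hz.2⟩

def Subgraph.ofLE (hle : G ≤ G') (Γ : G.Subgraph) : G'.Subgraph :=
  { Γ with adj_sub := fun h => hle (Γ.adj_sub h) }

lemma Subgraph.ofLE_injective (hle : G ≤ G') : Function.Injective (Subgraph.ofLE hle) :=
  fun _ _ h => Subgraph.ext (congrArg (·.verts) h) (congrArg (·.Adj) h)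

lemma numCopies_eq_ncard_of_le (hle : G ≤ G') :
    numCopies H G = {Γ : G'.Subgraph | Nonempty (Γ.coe ≃g H) ∧
      ∀ a b, Γ.Adj a b → G.Adj a b}.ncard := by
  rw [numCopies, ← Set.ncard_image_of_injective _ (Subgraph.ofLE_injective hle)]
  congr 1
  ext Γ
  constructor
  · rintro ⟨Γ₀, hΓ₀, rfl⟩
    exact ⟨hΓ₀, fun a b h => Γ₀.adj_sub h⟩
  · rintro ⟨hΓ, hG⟩
    exact ⟨{ Γ with adj_sub := fun h => hG _ _ h }, hΓ, rfl⟩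

lemma exists_iso_subgraph_new_edge_iff :
    (∃ Γ : G'.Subgraph, Nonempty (Γ.coe ≃g H) ∧ ∃ a b, Γ.Adj a b ∧ ¬ G.Adj a b) ↔
      ∃ f : Copy H G', ∃ u v, H.Adj u v ∧ ¬ G.Adj (f u) (f v) := by
  constructor
  · rintro ⟨Γ, ⟨e⟩, a, b, hab, hG⟩
    obtain ⟨f, rfl⟩ : Γ ∈ Set.range (Copy.toSubgraph (A := H)) := by
      rw [Copy.range_toSubgraph]; exact ⟨e.symm⟩
    obtain ⟨u, v, huv, rfl, rfl⟩ := hab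
    exact ⟨f, u, v, huv, hG⟩
  · rintro ⟨f, u, v, huv, hG⟩
    exact ⟨f.toSubgraph, ⟨f.isoToSubgraph.symm⟩, f u, f v, ⟨u, v, huv, rfl, rfl⟩, hG⟩

lemma numCopies_lt_numCopies_iff [Finite β] (hle : G ≤ G') :
    numCopies H G < numCopies H G' ↔
      ∃ f : Copy H G', ∃ u v, H.Adj u v ∧ ¬ G.Adj (f u) (f v) := by
  rw [← exists_iso_subgraph_new_edge_iff, numCopies_eq_ncard_of_le hle, numCopies]
  constructor
  · intro hlt
    by_contra! h
    exact hlt.ne <| congrArg Set.ncard <|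
      Set.ext fun Γ => ⟨And.left, fun hΓ => ⟨hΓ, h Γ hΓ⟩⟩
  · rintro ⟨Γ, hΓ, a, b, hab, hG⟩
    exact Set.ncard_lt_ncard ⟨fun _ h => h.1, fun hsub => hG ((hsub hΓ).2 a b hab)⟩

def Copy.sumElim {ι κ : Type*} (a : ι ↪ β) (b : κ ↪ β)
    (hab : ∀ i k, G.Adj (a i) (b k)) : Copy (_root_.completeBipartiteGraph ι κ) G where
  toHom := ⟨Sum.elim a b, by rintro (i | k) (j | l) h <;> simp_all [(hab _ _).symm]⟩
  injective' := a.injective.sumElim b.injective fun i k => (hab i k).ne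

@[simp]
lemma Copy.coe_sumElim {ι κ : Type*} (a : ι ↪ β) (b : κ ↪ β)
    (hab : ∀ i k, G.Adj (a i) (b k)) :
    ⇑(Copy.sumElim a b hab) = Sum.elim a b := rfl

end Copies

section CompleteBipartite

variable [Finite β] {G : SimpleGraph β} {s : ℕ}

lemma bootStep_adj_of_commonNeighbors (hs : 1 ≤ s) {p q r : β} (hpq : p ≠ q)
    (hcommon : s - 1 ≤ (G.commonNeighbors p q).ncard) (hqr : G.Adj q r) (hrp : r ≠ p) :
    (bootStep (K[2, s]) G).Adj p r := by
  by_cases hpr : G.Adj p r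
  · exact le_bootStep _ G hpr
  refine Or.inr ((fromRel_adj _ _ _).2 ⟨hrp.symm, Or.inl ?_⟩)
  obtain ⟨t, hts, htcard⟩ := Set.exists_subset_card_eq hcommon
  have hrt : r ∉ t := fun hr => hpr (hts hr).1
  have hcard : Nat.card (insert r t : Set β) = s := by
    rw [Nat.card_coe_set_eq, Set.ncard_insert_of_notMem hrt, htcard]; omega
  set G₂ := G ⊔ fromEdgeSet {s(p, r)}
  have hadj : ∀ x ∈ insert r t, G₂.Adj p x ∧ G₂.Adj q x := by
    rintro x (rfl | hx)
    · exact ⟨Or.inr ⟨rfl, hrp.symm⟩, Or.inl hqr⟩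
    · exact ⟨Or.inl (hts hx).1, Or.inl (hts hx).2⟩
  let e := Finite.equivFinOfCardEq hcard
  let a : Fin 2 ↪ β := ⟨![p, q], by
    intro i j; fin_cases i <;> fin_cases j <;> simp [hpq, hpq.symm]⟩
  let b : Fin s ↪ β := e.symm.toEmbedding.trans (Function.Embedding.subtype _)
  have hab : ∀ i k, G₂.Adj (a i) (b k) := by
    intro i k
    have := hadj _ (e.symm k).2
    fin_cases i
    exacts [this.1, this.2]
  refine (numCopies_lt_numCopies_iff le_sup_left).2
    ⟨Copy.sumElim a b hab, .inl 0, .inr (e ⟨r, Set.mem_insert r t⟩), by simp, ?_⟩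
  simp only [Copy.coe_sumElim, Sum.elim_inl, Sum.elim_inr, b, Function.Embedding.trans_apply,
    Equiv.coe_toEmbedding, Equiv.symm_apply_apply, Function.Embedding.coe_subtype]
  exact hpr

lemma exists_pivot_of_copy (f : Copy (K[2, s]) G)
    {u v : Fin 2 ⊕ Fin s} (huv : (K[2, s]).Adj u v) :
    ∃ x y w, s(x, y) = s(f u, f v) ∧ w ≠ x ∧ G.Adj w y ∧
      s ≤ (G.commonNeighbors x w).ncard := by
  have key : ∀ i k, ∃ x y w, s(x, y) = s(f (.inl i), f (.inr k)) ∧ w ≠ x ∧ G.Adj w y ∧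
      s ≤ (G.commonNeighbors x w).ncard := by
    intro i k
    have hrev : Sum.inl (Fin.rev i) ≠ (Sum.inl i : Fin 2 ⊕ Fin s) := by
      simp [Fin.ext_iff, Fin.val_rev]; omega
    refine ⟨f (.inl i), f (.inr k), f (.inl i.rev), rfl, f.injective.ne hrev,
      f.toHom.map_adj (by simp), ?_⟩
    have hinj : Function.Injective fun l : Fin s => f (.inr l) :=
      fun _ _ h => Sum.inr_injective (f.injective h)
    calc s = (Set.range fun l => f (.inr l)).ncard := by
          rw [Set.ncard_range_of_injective hinj, Nat.card_fin]
      _ ≤ (G.commonNeighbors (f (.inl i)) (f (.inl i.rev))).ncard := by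
          refine Set.ncard_le_ncard ?_
          rintro _ ⟨l, rfl⟩
          exact ⟨f.toHom.map_adj (by simp), f.toHom.map_adj (by simp)⟩
  rcases u with i | k <;> rcases v with j | l
  · simp at huv
  · exact key i l
  · rw [Sym2.eq_swap]; exact key j k
  · simp at huv

lemma exists_pivot_of_adj_bootStep {c d : β}
    (h : (bootStep (K[2, s]) G).Adj c d) (h₀ : ¬ G.Adj c d) :
    ∃ x y w, s(x, y) = s(c, d) ∧ G.Adj w y ∧
      s ≤ ((bootStep (K[2, s]) G).commonNeighbors x w).ncard := by
  obtain ⟨hcd, hlt⟩ := (fromRel_adj _ _ _).1 (h.resolve_left h₀)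
  have hlt : numCopies (K[2, s]) G <
      numCopies (K[2, s]) (G ⊔ edge c d) := by
    rcases hlt with hlt | hlt
    · exact hlt
    · rwa [Sym2.eq_swap] at hlt
  have hle : G ⊔ edge c d ≤ bootStep (K[2, s]) G :=
    sup_le (le_bootStep _ G) ((edge_le_iff _).2 (Or.inr h))
  obtain ⟨f, u, v, huv, hnew⟩ := (numCopies_lt_numCopies_iff le_sup_left).1 hlt
  have hfuv : s(f u, f v) = s(c, d) :=
    Sym2.eq_iff.2 ((edge_adj ..).1 ((f.toHom.map_adj huv).resolve_left hnew)).1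
  obtain ⟨x, y, w, hxy, hwx, hwy, hcommon⟩ := exists_pivot_of_copy f huv
  refine ⟨x, y, w, hxy.trans hfuv, ?_, hcommon.trans (Set.ncard_le_ncard
    (commonNeighbors_mono hle x w))⟩
  refine hwy.resolve_right fun hwy' => hwx ?_
  obtain ⟨hwy_cd, hwy_ne⟩ := (edge_adj ..).1 hwy'
  rcases Sym2.eq_iff.1 ((Sym2.eq_iff.2 hwy_cd).trans (hxy.trans hfuv).symm) with
    ⟨h, -⟩ | ⟨h, -⟩
  exacts [h, absurd h hwy_ne]

end CompleteBipartite

section Blocks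

variable {G : SimpleGraph β} {s : ℕ} {r : Setoid β}

def BlocksCohesive (s : ℕ) (r : Setoid β) (G : SimpleGraph β) : Prop :=
  ∀ ⦃x y⦄, r x y → x ≠ y → s - 1 ≤ (G.commonNeighbors x y).ncard

def BlocksSeparated (s : ℕ) (r : Setoid β) (G : SimpleGraph β) : Prop :=
  ∀ ⦃x y⦄, s ≤ (G.commonNeighbors x y).ncard → r x y

def BlockAdj (r : Setoid β) (G : SimpleGraph β) (x y : β) : Prop :=
  ∃ x' y', r x x' ∧ r y y' ∧ G.Adj x' y'

lemma BlockAdj.symm {x y : β} (h : BlockAdj r G x y) : BlockAdj r G y x :=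
  let ⟨x', y', hx, hy, hadj⟩ := h
  ⟨y', x', hy, hx, hadj.symm⟩

variable [Finite β]

lemma BlocksCohesive.mono {G' : SimpleGraph β} (hG : BlocksCohesive s r G) (hle : G ≤ G') :
    BlocksCohesive s r G' :=
  fun _ _ hxy hne => (hG hxy hne).trans (Set.ncard_le_ncard (commonNeighbors_mono hle _ _))

lemma BlocksCohesive.bootStep_adj (hs : 1 ≤ s) (hG : BlocksCohesive s r G) {p q x : β}
    (hpq : r p q) (hqx : G.Adj q x) (hxp : x ≠ p) :
    (bootStep (K[2, s]) G).Adj p x := by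
  obtain rfl | hne := eq_or_ne p q
  · exact le_bootStep _ G hqx
  · exact bootStep_adj_of_commonNeighbors hs hne (hG hpq hne) hqx hxp

lemma BlocksCohesive.bootStep_bootStep_adj (hs : 1 ≤ s) (hG : BlocksCohesive s r G)
    (hG' : BlocksCohesive s r (bootStep (K[2, s]) G)) {x y : β}
    (h : BlockAdj r G x y) (hxy : x ≠ y) :
    (bootStep (K[2, s])
      (bootStep (K[2, s]) G)).Adj x y := by
  obtain ⟨x', y', hx, hy, hadj⟩ := h
  obtain rfl | hne := eq_or_ne y' x
  · obtain rfl | hne' := eq_or_ne x' y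
    · exact le_bootStep _ _ (le_bootStep _ G hadj.symm)
    · exact hG'.bootStep_adj hs hx (hG.bootStep_adj hs hy hadj.symm hne').symm hxy.symm
  · exact (hG'.bootStep_adj hs hy (hG.bootStep_adj hs hx hadj hne).symm hxy).symm

lemma BlockAdj.of_bootStep_adj
    (hsep : BlocksSeparated s r (bootStep (K[2, s]) G)) {c d : β}
    (h : (bootStep (K[2, s]) G).Adj c d) : BlockAdj r G c d := by
  by_cases h₀ : G.Adj c d
  · exact ⟨c, d, r.refl c, r.refl d, h₀⟩
  obtain ⟨x, y, w, hxy, hwy, hcommon⟩ := exists_pivot_of_adj_bootStep h h₀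
  have hxy' : BlockAdj r G x y := ⟨w, y, hsep hcommon, r.refl y, hwy⟩
  rcases Sym2.eq_iff.1 hxy with ⟨rfl, rfl⟩ | ⟨rfl, rfl⟩
  exacts [hxy', hxy'.symm]

lemma BlockAdj.of_bootStep
    (hsep : BlocksSeparated s r (bootStep (K[2, s]) G)) {x y : β}
    (h : BlockAdj r (bootStep (K[2, s]) G) x y) :
    BlockAdj r G x y := by
  obtain ⟨x', y', hx, hy, hadj⟩ := h
  obtain ⟨x'', y'', hx', hy', hadj'⟩ := BlockAdj.of_bootStep_adj hsep hadj
  exact ⟨x'', y'', r.trans hx hx', r.trans hy hy', hadj'⟩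

lemma BlocksCohesive.le_ncard_commonNeighbors_bootStep (hs : 1 ≤ s)
    (hG : BlocksCohesive s r G) {p q x y : β} (hpq : s ≤ (G.commonNeighbors p q).ncard)
    (hxp : r x p) (hyq : r y q) (hxy : x ≠ y) :
    s - 1 ≤ ((bootStep (K[2, s]) G).commonNeighbors x y).ncard := by
  set T := G.commonNeighbors p q
  have hsub : T \ {x, y} ⊆
      (bootStep (K[2, s]) G).commonNeighbors x y := by
    rintro b ⟨⟨hpb, hqb⟩, hb⟩
    simp only [Set.mem_insert_iff, Set.mem_singleton_iff, not_or] at hb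
    exact ⟨hG.bootStep_adj hs hxp hpb hb.1, hG.bootStep_adj hs hyq hqb hb.2⟩
  have hsplit := Set.ncard_inter_add_ncard_sdiff_eq_ncard T {x, y}
  by_cases hxyT : x ∈ T ∧ y ∈ T
  · have hp : p ∈ (bootStep (K[2, s]) G).commonNeighbors x y :=
      ⟨le_bootStep _ G hxyT.1.1.symm, le_bootStep _ G hxyT.2.1.symm⟩
    have hpT : p ∉ T \ {x, y} := fun h => G.loopless.irrefl p h.1.1
    have hinter : T ∩ {x, y} = {x, y} := Set.inter_eq_right.2 (Set.pair_subset hxyT.1 hxyT.2)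
    rw [hinter, Set.ncard_pair hxy] at hsplit
    calc s - 1 ≤ (insert p (T \ {x, y})).ncard := by
          rw [Set.ncard_insert_of_notMem hpT]; omega
      _ ≤ _ := Set.ncard_le_ncard (Set.insert_subset hp hsub)
  · have hinter : (T ∩ {x, y}).ncard ≤ 1 := by
      refine (Set.ncard_le_one_iff).2 fun ha hb => ?_
      simp only [Set.mem_inter_iff, Set.mem_insert_iff, Set.mem_singleton_iff] at ha hb
      rcases ha with ⟨ha, rfl | rfl⟩ <;> rcases hb with ⟨hb, rfl | rfl⟩ <;> tauto
    calc s - 1 ≤ (T \ {x, y}).ncard := by omega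
      _ ≤ _ := Set.ncard_le_ncard hsub

lemma BlocksCohesive.le_ncard_commonNeighbors_bootStep_of_rel_or (hs : 1 ≤ s)
    (hG : BlocksCohesive s r G) {p q x y : β} (hpq : s ≤ (G.commonNeighbors p q).ncard)
    (hx : r x p ∨ r x q) (hy : r y p ∨ r y q) (hxy : x ≠ y) :
    s - 1 ≤ ((bootStep (K[2, s]) G).commonNeighbors x y).ncard := by
  have hqp : s ≤ (G.commonNeighbors q p).ncard := G.commonNeighbors_symm p q ▸ hpq
  have hG' := hG.mono (le_bootStep (K[2, s]) G)
  rcases hx with hx | hx <;> rcases hy with hy | hy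
  · exact hG' (r.trans hx (r.symm hy)) hxy
  · exact hG.le_ncard_commonNeighbors_bootStep hs hpq hx hy hxy
  · exact hG.le_ncard_commonNeighbors_bootStep hs hqp hx hy hxy
  · exact hG' (r.trans hx (r.symm hy)) hxy

lemma bootProcess_add_three_le (hs : 1 ≤ s) {i : ℕ}
    (hcoh : ∀ t, i ≤ t → BlocksCohesive s r (bootProcess (K[2, s]) G t))
    (hsep : ∀ t, i < t → t ≤ i + 3 →
      BlocksSeparated s r (bootProcess (K[2, s]) G t)) :
    bootProcess (K[2, s]) G (i + 3) ≤
      bootProcess (K[2, s]) G (i + 2) := by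
  intro c d hcd
  have hback : ∀ t, i ≤ t → t < i + 3 →
      BlockAdj r (bootProcess (K[2, s]) G (t + 1)) c d →
      BlockAdj r (bootProcess (K[2, s]) G t) c d :=
    fun t h₁ h₂ => BlockAdj.of_bootStep (hsep (t + 1) (by omega) (by omega))
  have hblock : BlockAdj r (bootProcess (K[2, s]) G i) c d :=
    hback i le_rfl (by omega) <| hback (i + 1) (by omega) (by omega) <|
      hback (i + 2) (by omega) (by omega) ⟨c, d, r.refl c, r.refl d, hcd⟩
  exact (hcoh i le_rfl).bootStep_bootStep_adj hs (hcoh (i + 1) (by omega)) hblock hcd.ne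

end Blocks

end SimpleGraph

theorem partition_coarsen_general {V : Type} [Fintype V] (s : ℕ) (hs : 3 ≤ s)
    (G : SimpleGraph V) (i : ℕ)
    (hi : i + 4 ≤ runningTime (completeBipartiteGraph (Fin 2) (Fin s)) G)
    (P : Set (Set V)) (hP : Setoid.IsPartition P)
    (hblocks : ∀ C ∈ P, ∀ x ∈ C, ∀ y ∈ C, x ≠ y → s - 1 ≤
      ((bootProcess (completeBipartiteGraph (Fin 2) (Fin s)) G i).neighborSet x ∩
        (bootProcess (completeBipartiteGraph (Fin 2) (Fin s)) G i).neighborSet y).ncard) :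
    ∃ A ∈ P, ∃ B ∈ P, A ≠ B ∧
      ∀ C ∈ (P \ {A, B}) ∪ {A ∪ B}, ∀ x ∈ C, ∀ y ∈ C, x ≠ y → s - 1 ≤
        ((bootProcess (completeBipartiteGraph (Fin 2) (Fin s)) G (i + 4)).neighborSet x ∩
          (bootProcess (completeBipartiteGraph (Fin 2) (Fin s)) G (i + 4)).neighborSet y).ncard := by
  set r := Setoid.mkClasses P hP.2
  have hr : ∀ x y, r x y ↔ ∃ C ∈ P, x ∈ C ∧ y ∈ C := fun x y => by
    rw [Setoid.rel_iff_exists_classes, Setoid.classes_mkClasses P hP]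
  have hcoh : ∀ t, i ≤ t →
      BlocksCohesive s r (bootProcess (completeBipartiteGraph (Fin 2) (Fin s)) G t) := by
    refine fun t ht => BlocksCohesive.mono (fun x y hxy hne => ?_) (bootProcess_mono _ _ ht)
    obtain ⟨C, hC, hx, hy⟩ := (hr x y).1 hxy
    exact hblocks C hC x hx y hy hne
  by_cases hsep : ∀ t, i < t → t ≤ i + 3 →
      BlocksSeparated s r (bootProcess (completeBipartiteGraph (Fin 2) (Fin s)) G t)
  · have hstall := bootProcess_add_three_le (by omega) hcoh hsep
    have : runningTime (completeBipartiteGraph (Fin 2) (Fin s)) G ≤ i + 2 :=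
      Nat.sInf_le ((bootProcess_mono _ _ (by omega)).antisymm hstall)
    omega
  simp only [BlocksSeparated, not_forall] at hsep
  obtain ⟨t, hit, hti, p, q, hpq, hnr⟩ := hsep
  obtain ⟨A, ⟨hA, hpA⟩, -⟩ := hP.2 p
  obtain ⟨B, ⟨hB, hqB⟩, -⟩ := hP.2 q
  refine ⟨A, hA, B, hB, fun hAB => hnr ((hr p q).2 ⟨A, hA, hpA, hAB ▸ hqB⟩), ?_⟩
  rintro C (⟨hC, -⟩ | hC) x hx y hy hxy
  · exact hcoh (i + 4) (by omega) ((hr x y).2 ⟨C, hC, hx, hy⟩) hxy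
  rw [Set.mem_singleton_iff.1 hC] at hx hy
  have hblock : ∀ z ∈ A ∪ B, r z p ∨ r z q := fun z hz =>
    hz.imp (fun h => (hr z p).2 ⟨A, hA, h, hpA⟩) (fun h => (hr z q).2 ⟨B, hB, h, hqB⟩)
  have hmono := bootProcess_mono (completeBipartiteGraph (Fin 2) (Fin s)) G
    (show t + 1 ≤ i + 4 by omega)
  exact ((hcoh t hit.le).le_ncard_commonNeighbors_bootStep_of_rel_or (by omega) hpq
    (hblock x hx) (hblock y hy) hxy).trans (Set.ncard_le_ncard (commonNeighbors_mono hmono x y))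

/-- In the `K_{2,s}`-bootstrap process (`s ≥ 3`) on an `n`-vertex graph
with `n ≥ s + 2`: if `i + 4 ≤ τ` and `P` is a partition of the vertex set in which any
two distinct vertices of a common block have at least `s − 1` common neighbours at time
`i`, then two distinct blocks `A, B ∈ P` can be merged so that in the coarser partition
`(P \ {A, B}) ∪ {A ∪ B}` any two distinct vertices of a common block have at least
`s − 1` common neighbours at time `i + 4`. -/
theorem partition_coarsen {V : Type} [Fintype V] (s : ℕ) (hs : 3 ≤ s)
    (G : SimpleGraph V) (hn : s + 2 ≤ Fintype.card V) (i : ℕ)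
    (hi : i + 4 ≤ runningTime (completeBipartiteGraph (Fin 2) (Fin s)) G)
    (P : Set (Set V)) (hP : Setoid.IsPartition P)
    (hblocks : ∀ C ∈ P, ∀ x ∈ C, ∀ y ∈ C, x ≠ y → s - 1 ≤
      ((bootProcess (completeBipartiteGraph (Fin 2) (Fin s)) G i).neighborSet x ∩
        (bootProcess (completeBipartiteGraph (Fin 2) (Fin s)) G i).neighborSet y).ncard) :
    ∃ A ∈ P, ∃ B ∈ P, A ≠ B ∧
      ∀ C ∈ (P \ {A, B}) ∪ {A ∪ B}, ∀ x ∈ C, ∀ y ∈ C, x ≠ y → s - 1 ≤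
        ((bootProcess (completeBipartiteGraph (Fin 2) (Fin s)) G (i + 4)).neighborSet x ∩
          (bootProcess (completeBipartiteGraph (Fin 2) (Fin s)) G (i + 4)).neighborSet y).ncard :=
  partition_coarsen_general s hs G i hi P hP hblocks
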